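/- Let γ > 0 and 0 < a < b < 1. Define S(u,v) = ∫_u^v e^{-1/z}·z/(1−z) dz and R(u,v) = (1/γ)·( log(v/(1−v)) − 2v − log(u/(1−u)) + 2u ), and set T(y) = ( S(y,b)·R(a,y) − S(a,y)·R(y,b) ) / S(a,b) for y ∈ [a,b]. Then T(a) = T(b) = 0, and for every y ∈ (a,b), T is twice differentiable at y with −γ y·T'(y) + γ y³(1−y)·T''(y) = −1. -/

import Mathlib

/-- Heterodyne scale density Q(z) = e^{-1/z}·z/(1−z). -/
noncomputable def Qhet (z : ℝ) : ℝ := Real.exp (-1 / z) * z / (1 - z)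

/-- Heterodyne scale integral S(u,v) = ∫_u^v Q(z) dz. -/
noncomputable def Shet (u v : ℝ) : ℝ := ∫ z in u..v, Qhet z

/-- Heterodyne R(u,v) = (1/γ)[log(z/(1−z)) − 2z]_u^v. -/
noncomputable def Rhet (γ u v : ℝ) : ℝ :=
  (1 / γ) * (Real.log (v / (1 - v)) - 2 * v - Real.log (u / (1 - u)) + 2 * u)

/-!
Write `R(u,v) = ρ(v) - ρ(u)` with `ρ(z) = (1/γ)(log(z/(1-z)) - 2z)`. Since `S` and `R` are both
additive over adjacent intervals, `T(y) = ρ(y) - ρ(a) - (R(a,b)/S(a,b)) · S(a,y)` on `(0,1)`: an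
affine combination of `ρ` and of the scale function `S(a,·)`. For the generator
`L f = -γ y f' + γ y³(1-y) f''` one has `L ρ = -1`, and `L S(a,·) = 0` because `Q` is the scale
density, i.e. `γ y³(1-y) Q' = γ y Q`; hence `L T = -1`.
-/

open Set Filter Topology

theorem hasDerivAt_and_hasDerivAt_deriv_of_eqOn {𝕜 F : Type*} [NontriviallyNormedField 𝕜]
    [NormedAddCommGroup F] [NormedSpace 𝕜 F] {f g g' g'' : 𝕜 → F} {s : Set 𝕜} {x : 𝕜}
    (hs : IsOpen s) (hx : x ∈ s) (hfg : EqOn f g s) (hg : ∀ t ∈ s, HasDerivAt g (g' t) t)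
    (hg' : ∀ t ∈ s, HasDerivAt g' (g'' t) t) :
    HasDerivAt f (g' x) x ∧ HasDerivAt (deriv f) (g'' x) x := by
  have hf : ∀ t ∈ s, HasDerivAt f (g' t) t := fun t ht =>
    (hg t ht).congr_of_eventuallyEq (hfg.eventuallyEq_of_mem (hs.mem_nhds ht))
  exact ⟨hf x hx, (hg' x hx).congr_of_eventuallyEq
    (eventually_of_mem (hs.mem_nhds hx) fun t ht => (hf t ht).deriv)⟩

noncomputable def hetPotential (γ z : ℝ) : ℝ := (1 / γ) * (Real.log (z / (1 - z)) - 2 * z)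

theorem Rhet_eq_sub (γ u v : ℝ) : Rhet γ u v = hetPotential γ v - hetPotential γ u := by
  unfold Rhet hetPotential
  ring

theorem Rhet_self (γ u : ℝ) : Rhet γ u u = 0 := by
  simp [Rhet_eq_sub]

theorem hasDerivAt_Qhet {y : ℝ} (h0 : y ≠ 0) (h1 : y ≠ 1) :
    HasDerivAt Qhet (Real.exp (-1 / y) / (y * (1 - y) ^ 2)) y := by
  have h1' : 1 - y ≠ 0 := sub_ne_zero.mpr h1.symm
  have hexp := ((hasDerivAt_const y (-1 : ℝ)).div (hasDerivAt_id' y) h0).exp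
  refine ((hexp.mul (hasDerivAt_id' y)).div ((hasDerivAt_const y 1).sub (hasDerivAt_id' y))
    h1').congr_deriv ?_
  simp only [Pi.div_apply, Pi.sub_apply, Pi.mul_apply]
  field_simp
  ring

theorem hasDerivAt_hetPotential (γ : ℝ) {y : ℝ} (h0 : y ≠ 0) (h1 : y ≠ 1) :
    HasDerivAt (hetPotential γ) ((1 / γ) * (1 / (y * (1 - y)) - 2)) y := by
  have h1' : 1 - y ≠ 0 := sub_ne_zero.mpr h1.symm
  have hodds := ((hasDerivAt_id' y).div ((hasDerivAt_const y 1).sub (hasDerivAt_id' y))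
    h1').log (div_ne_zero h0 h1')
  refine ((hodds.sub ((hasDerivAt_id' y).const_mul 2)).const_mul (1 / γ)).congr_deriv ?_
  simp only [Pi.div_apply, Pi.sub_apply]
  field_simp
  ring

theorem hasDerivAt_deriv_hetPotential (γ : ℝ) {y : ℝ} (h0 : y ≠ 0) (h1 : y ≠ 1) :
    HasDerivAt (fun z => (1 / γ) * (1 / (z * (1 - z)) - 2))
      ((1 / γ) * ((2 * y - 1) / (y * (1 - y)) ^ 2)) y := by
  have hne : y * (1 - y) ≠ 0 := mul_ne_zero h0 (sub_ne_zero.mpr h1.symm)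
  refine ((((hasDerivAt_const y (1 : ℝ)).div ((hasDerivAt_id' y).mul
    ((hasDerivAt_const y 1).sub (hasDerivAt_id' y))) hne).sub_const 2).const_mul
    (1 / γ)).congr_deriv ?_
  simp only [Pi.sub_apply, Pi.mul_apply]
  ring

theorem hetGenerator_Qhet (γ : ℝ) {y : ℝ} (h1 : y ≠ 1) :
    -γ * y * Qhet y + γ * y ^ 3 * (1 - y) * (Real.exp (-1 / y) / (y * (1 - y) ^ 2)) = 0 := by
  have h1' : 1 - y ≠ 0 := sub_ne_zero.mpr h1.symm
  unfold Qhet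
  field_simp
  ring

theorem hetGenerator_hetPotential {γ y : ℝ} (hγ : γ ≠ 0) (h0 : y ≠ 0) (h1 : y ≠ 1) :
    -γ * y * ((1 / γ) * (1 / (y * (1 - y)) - 2)) +
      γ * y ^ 3 * (1 - y) * ((1 / γ) * ((2 * y - 1) / (y * (1 - y)) ^ 2)) = -1 := by
  have h1' : 1 - y ≠ 0 := sub_ne_zero.mpr h1.symm
  field_simp
  ring

theorem continuousOn_Qhet : ContinuousOn Qhet (Ioo 0 1) := fun _ hz =>
  (hasDerivAt_Qhet hz.1.ne' hz.2.ne).continuousAt.continuousWithinAt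

theorem intervalIntegrable_Qhet {u v : ℝ} (hu : u ∈ Ioo (0 : ℝ) 1) (hv : v ∈ Ioo (0 : ℝ) 1) :
    IntervalIntegrable Qhet MeasureTheory.volume u v :=
  (continuousOn_Qhet.mono (ordConnected_Ioo.uIcc_subset hu hv)).intervalIntegrable

theorem Shet_add_Shet {u v w : ℝ} (hu : u ∈ Ioo (0 : ℝ) 1) (hv : v ∈ Ioo (0 : ℝ) 1)
    (hw : w ∈ Ioo (0 : ℝ) 1) : Shet u v + Shet v w = Shet u w :=
  intervalIntegral.integral_add_adjacent_intervals (intervalIntegrable_Qhet hu hv)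
    (intervalIntegrable_Qhet hv hw)

theorem Qhet_pos {z : ℝ} (hz : z ∈ Ioo (0 : ℝ) 1) : 0 < Qhet z :=
  div_pos (mul_pos (Real.exp_pos _) hz.1) (sub_pos.mpr hz.2)

theorem Shet_pos {u v : ℝ} (hu : 0 < u) (huv : u < v) (hv : v < 1) : 0 < Shet u v :=
  intervalIntegral.intervalIntegral_pos_of_pos_on
    (intervalIntegrable_Qhet ⟨hu, huv.trans hv⟩ ⟨hu.trans huv, hv⟩)
    (fun _ hz => Qhet_pos ⟨hu.trans hz.1, hz.2.trans hv⟩) huv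

theorem hasDerivAt_Shet {u y : ℝ} (hu : u ∈ Ioo (0 : ℝ) 1) (hy : y ∈ Ioo (0 : ℝ) 1) :
    HasDerivAt (Shet u) (Qhet y) y :=
  intervalIntegral.integral_hasDerivAt_right (intervalIntegrable_Qhet hu hy)
    (continuousOn_Qhet.stronglyMeasurableAtFilter isOpen_Ioo y hy)
    (continuousOn_Qhet.continuousAt (isOpen_Ioo.mem_nhds hy))

theorem exitTime_eqOn (γ : ℝ) {a b : ℝ} (ha : a ∈ Ioo (0 : ℝ) 1) (hb : b ∈ Ioo (0 : ℝ) 1)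
    (hS : Shet a b ≠ 0) :
    EqOn (fun y => (Shet y b * Rhet γ a y - Shet a y * Rhet γ y b) / Shet a b)
      (fun y => hetPotential γ y - hetPotential γ a - Rhet γ a b / Shet a b * Shet a y)
      (Ioo 0 1) := by
  intro y hy
  simp only
  rw [← Shet_add_Shet ha hy hb] at hS ⊢
  simp only [Rhet_eq_sub]
  field_simp
  ring

/-- The mean first exit time of (a,b) under heterodyne detection,
T(y) = (S(y,b)R(a,y) − S(a,y)R(y,b))/S(a,b), vanishes at a and b and solves
−γy T'(y) + γy³(1−y) T''(y) = −1 on (a,b). -/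
theorem het_mean_exit_time (γ a b : ℝ) (hγ : 0 < γ) (ha : 0 < a) (hab : a < b)
    (hb : b < 1) :
    let T : ℝ → ℝ := fun y =>
      (Shet y b * Rhet γ a y - Shet a y * Rhet γ y b) / Shet a b
    T a = 0 ∧ T b = 0 ∧
    ∀ y ∈ Set.Ioo a b, ∃ t' t'' : ℝ,
      HasDerivAt T t' y ∧ HasDerivAt (deriv T) t'' y ∧
      -γ * y * t' + γ * y ^ 3 * (1 - y) * t'' = -1 := by
  intro T
  have ha' : a ∈ Ioo (0 : ℝ) 1 := ⟨ha, hab.trans hb⟩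
  have hb' : b ∈ Ioo (0 : ℝ) 1 := ⟨ha.trans hab, hb⟩
  refine ⟨by simp [T, Shet, Rhet_self], by simp [T, Shet, Rhet_self], fun y hy => ?_⟩
  have hy' : y ∈ Ioo (0 : ℝ) 1 := ⟨ha.trans hy.1, hy.2.trans hb⟩
  set c := Rhet γ a b / Shet a b
  obtain ⟨hT', hT''⟩ := hasDerivAt_and_hasDerivAt_deriv_of_eqOn isOpen_Ioo hy'
    (exitTime_eqOn γ ha' hb' (Shet_pos ha hab hb).ne')
    (fun t ht => ((hasDerivAt_hetPotential γ ht.1.ne' ht.2.ne).sub_const _).sub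
      ((hasDerivAt_Shet ha' ht).const_mul c))
    (fun t ht => (hasDerivAt_deriv_hetPotential γ ht.1.ne' ht.2.ne).sub
      ((hasDerivAt_Qhet ht.1.ne' ht.2.ne).const_mul c))
  refine ⟨_, _, hT', hT'', ?_⟩
  linear_combination hetGenerator_hetPotential hγ.ne' hy'.1.ne' hy'.2.ne -
    c * hetGenerator_Qhet γ hy'.2.ne
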